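/- For the generating function G_n(s;x) = (∑_{i∈E} s_i x_i)^n, if L is the multilocus Wright-Fisher generator with recombination (genetic drift, mutation at L loci with rates θ_l and transition matrices P^{(l)}, and recombination with rates ρ_l), then applying L to G_n in x yields a linear combination of G_{n-2}, G_{n-1} and G_n; in particular the coefficient of G_n is −n(n−1+θ+ρ)/2, where θ = ∑_l θ_l and ρ = ∑_l ρ_l. -/

import Mathlib

open Finset

section
variable {L : ℕ} {El : Fin L → Type} [∀ l, Fintype (El l)] [∀ l, DecidableEq (El l)]

/-- Marginal frequency `x_i^A = ∑_{j : j|_A = i|_A} x_j` over a set of loci `A`. -/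
def marg (x : (∀ l, El l) → ℝ) (A : Finset (Fin L)) (i : ∀ l, El l) : ℝ :=
  ∑ j ∈ univ.filter (fun j : ∀ l, El l => ∀ l ∈ A, j l = i l), x j

/-- The loci `{1,…,l}` (0-indexed: those with index `≤ k`). -/
def leqSet (k : ℕ) : Finset (Fin L) := univ.filter (fun m : Fin L => (m : ℕ) ≤ k)

/-- The loci `{l+1,…,L}` (0-indexed: those with index `> k`). -/
def gtSet (k : ℕ) : Finset (Fin L) := univ.filter (fun m : Fin L => k < (m : ℕ))

/-- Partial derivative in the coordinate of haplotype `i`. -/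
noncomputable def pderivH (i : ∀ l, El l) (f : ((∀ l, El l) → ℝ) → ℝ)
    (x : (∀ l, El l) → ℝ) : ℝ :=
  deriv (fun t => f (Function.update x i t)) (x i)

/-- The multilocus Wright-Fisher generator with drift, mutation (rates `θ_l`,
transition matrices `P^{(l)}`) and recombination (rates `ρ_l`). -/
noncomputable def WFgenR (θ : Fin L → ℝ) (P : ∀ l, El l → El l → ℝ) (ρ : ℕ → ℝ)
    (f : ((∀ l, El l) → ℝ) → ℝ) (x : (∀ l, El l) → ℝ) : ℝ :=
  (1 / 2) * ∑ i : ∀ l, El l,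
    ((∑ j : ∀ l, El l, x i * ((if i = j then (1 : ℝ) else 0) - x j) *
        pderivH j (fun y => pderivH i f y) x)
      + ((∑ l, θ l * ((∑ j : El l, P l j (i l) * x (Function.update i l j)) - x i))
          + ∑ k ∈ range (L - 1), ρ k * (marg x (leqSet k) i * marg x (gtSet k) i - x i))
        * pderivH i f x)

/-- The generating function `G_n(s;x) = (∑_i s_i x_i)^n`. -/
def genG (n : ℕ) (s x : (∀ l, El l) → ℝ) : ℝ := (∑ i, s i * x i) ^ n

lemma pderivH_genG (n : ℕ) (s x : (∀ l, El l) → ℝ) (i : ∀ l, El l) :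
    pderivH i (genG n s) x = (n : ℝ) * s i * genG (n-1) s x := by
  unfold pderivH genG
  have key : ∀ t : ℝ, (∑ j, s j * Function.update x i t j)
      = ((∑ j, s j * x j) - s i * x i) + s i * t := by
    intro t
    have : ∀ j : ∀ l, El l, s j * Function.update x i t j
        = (if i = j then s j * t - s j * x j else 0) + s j * x j := by
      intro j
      rcases eq_or_ne i j with h | h
      · subst h; simp
      · simp [Function.update_of_ne (Ne.symm h), h]
    rw [Finset.sum_congr rfl fun j _ => this j, Finset.sum_add_distrib,
      Finset.sum_ite_eq univ i]
    simp
    ring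
  have hfun : (fun t => (∑ j, s j * Function.update x i t j) ^ n)
      = fun t => (((∑ j, s j * x j) - s i * x i) + s i * t) ^ n := by
    funext t; rw [key]
  rw [hfun]
  have h1 : HasDerivAt (fun t : ℝ => ((∑ j, s j * x j) - s i * x i) + s i * t)
      (s i) (x i) := by
    simpa using ((hasDerivAt_id (x i)).const_mul (s i)).const_add
      ((∑ j, s j * x j) - s i * x i)
  have h2 := (h1.fun_pow n).deriv
  rw [h2, sub_add_cancel]; ring

lemma pderivH_const_mul_genG (c : ℝ) (m : ℕ) (s x : (∀ l, El l) → ℝ) (j : ∀ l, El l) :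
    pderivH j (fun y => c * genG m s y) x = c * ((m : ℝ) * s j * genG (m-1) s x) := by
  unfold pderivH
  rw [deriv_const_mul_field c]
  rw [show deriv (fun t => genG m s (Function.update x j t)) (x j)
      = pderivH j (genG m s) x from rfl, pderivH_genG]

end

lemma hcN (n : ℕ) : n.choose 2 * 2 = n * (n-1) := by
  rw [Nat.choose_two_right, Nat.div_mul_cancel]
  rcases n with _|k
  · simp
  · simpa [Nat.mul_comm] using (Nat.even_mul_succ_self k).two_dvd

lemma e2 (n : ℕ) : (n:ℝ) * ((n-1:ℕ):ℝ) = 2 * (n.choose 2 : ℝ) := by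
  have h2 := congrArg (fun m : ℕ => (m:ℝ)) (hcN n)
  push_cast at h2
  linarith

lemma powA (n : ℕ) (a : ℝ) : (n:ℝ) * a^(n-1) * a = (n:ℝ) * a^n := by
  rcases n with _|k
  · simp
  · rw [pow_succ]; push_cast; ring

lemma powB (n : ℕ) (a : ℝ) :
    (n:ℝ) * ((n-1:ℕ):ℝ) * a^(n-1-1) * a * a = (n:ℝ) * ((n:ℝ)-1) * a^n := by
  match n with
  | 0 => simp
  | 1 => simp
  | (k+2) =>
    show ((k+2:ℕ):ℝ) * ((k+2-1:ℕ):ℝ) * a^(k+2-1-1) * a * a = _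
    push_cast
    rw [pow_succ, pow_succ]
    ring

/-- Applying the multilocus Wright-Fisher generator with recombination to the
generating function `G_n(s;·)` yields a linear combination of `G_{n-2}`, `G_{n-1}`
and `G_n`, with the coefficient of `G_n` equal to `−n(n−1+θ+ρ)/2`
(eq. (8) of the paper). -/
theorem WFgenR_generating_function (L : ℕ) (El : Fin L → Type)
    [∀ l, Fintype (El l)] [∀ l, DecidableEq (El l)]
    (θ : Fin L → ℝ) (P : ∀ l, El l → El l → ℝ) (ρ : ℕ → ℝ)
    (n : ℕ) (s x : (∀ l, El l) → ℝ) :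
    WFgenR θ P ρ (genG n s) x =
      (∑ i : ∀ l, El l,
        ((n.choose 2 : ℝ) * s i ^ 2 * x i * genG (n - 2) s x
          + (∑ l, (θ l * n / 2) * ∑ j : El l,
              s i * P l j (i l) * x (Function.update i l j) * genG (n - 1) s x)
          + ∑ k ∈ Finset.range (L - 1), (ρ k * n / 2) *
              s i * marg x (leqSet k) i * marg x (gtSet k) i * genG (n - 1) s x))
      - ((n : ℝ) * ((n : ℝ) - 1 + (∑ l, θ l) + (∑ k ∈ Finset.range (L - 1), ρ k)) / 2)
          * genG n s x := by
  rw [WFgenR]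
  simp only [pderivH_genG, pderivH_const_mul_genG]
  simp only [genG]
  set D := ∑ i : ∀ l, El l, s i * x i with hD
  have hAi : ∀ i : ∀ l, El l,
      (∑ j : ∀ l, El l, x i * ((if i = j then (1:ℝ) else 0) - x j) *
          ((n:ℝ) * s i * (((n-1:ℕ):ℝ) * s j * D ^ (n-1-1))))
      = 2 * ((n.choose 2 : ℝ) * s i ^ 2 * x i * D ^ (n-2))
        - ((n:ℝ) * ((n-1:ℕ):ℝ) * D^(n-1-1) * (s i * x i)) * D := by
    intro i
    have step : ∀ j : ∀ l, El l, x i * ((if i = j then (1:ℝ) else 0) - x j) *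
          ((n:ℝ) * s i * (((n-1:ℕ):ℝ) * s j * D ^ (n-1-1)))
        = (if i = j then (n:ℝ) * ((n-1:ℕ):ℝ) * D^(n-1-1) * (s i ^ 2 * x i) else 0)
          - ((n:ℝ) * ((n-1:ℕ):ℝ) * D^(n-1-1) * (s i * x i)) * (s j * x j) := by
      intro j
      rcases eq_or_ne i j with h | h
      · subst h; simp; ring
      · simp [h]; ring
    rw [Finset.sum_congr rfl fun j _ => step j, Finset.sum_sub_distrib,
      Finset.sum_ite_eq univ i, ← Finset.mul_sum, ← hD]
    simp only [Finset.mem_univ, if_true]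
    rw [show n-1-1 = n-2 from by omega, e2 n]
    ring
  have hm : ∀ (i : ∀ l, El l) (l : Fin L),
      (∑ j : El l, s i * P l j (i l) * x (Function.update i l j) * D^(n-1))
      = (∑ j : El l, P l j (i l) * x (Function.update i l j)) * (s i * D^(n-1)) := by
    intro i l
    rw [Finset.sum_mul]
    exact Finset.sum_congr rfl fun j _ => by ring
  have hBi : ∀ i : ∀ l, El l,
      ((∑ l, θ l * ((∑ j : El l, P l j (i l) * x (Function.update i l j)) - x i))
        + ∑ k ∈ range (L-1), ρ k * (marg x (leqSet k) i * marg x (gtSet k) i - x i))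
        * ((n:ℝ) * s i * D^(n-1))
      = 2 * (∑ l, (θ l * n / 2) * ∑ j : El l,
            s i * P l j (i l) * x (Function.update i l j) * D^(n-1))
        + 2 * (∑ k ∈ range (L-1), (ρ k * n / 2) *
            s i * marg x (leqSet k) i * marg x (gtSet k) i * D^(n-1))
        - ((∑ l, θ l) + ∑ k ∈ range (L-1), ρ k) * ((n:ℝ) * D^(n-1) * (s i * x i)) := by
    intro i
    have hl : ∀ l : Fin L, θ l * ((∑ j : El l, P l j (i l) * x (Function.update i l j)) - x i)
        * ((n:ℝ) * s i * D^(n-1))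
        = 2 * ((θ l * n / 2) * ∑ j : El l,
            s i * P l j (i l) * x (Function.update i l j) * D^(n-1))
          - θ l * ((n:ℝ) * D^(n-1) * (s i * x i)) := by
      intro l; rw [hm i l]; ring
    have hk : ∀ k ∈ range (L-1), ρ k * (marg x (leqSet k) i * marg x (gtSet k) i - x i)
        * ((n:ℝ) * s i * D^(n-1))
        = 2 * ((ρ k * n / 2) * s i * marg x (leqSet k) i * marg x (gtSet k) i * D^(n-1))
          - ρ k * ((n:ℝ) * D^(n-1) * (s i * x i)) := fun k _ => by ring
    rw [add_mul, Finset.sum_mul, Finset.sum_mul,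
      Finset.sum_congr rfl fun l _ => hl l, Finset.sum_congr rfl hk,
      Finset.sum_sub_distrib, Finset.sum_sub_distrib,
      ← Finset.mul_sum, ← Finset.mul_sum, ← Finset.sum_mul, ← Finset.sum_mul,
      ← Finset.sum_mul]
    ring
  simp only [hAi, hBi, Finset.sum_add_distrib, Finset.sum_sub_distrib,
    ← Finset.mul_sum, ← Finset.sum_mul, ← hD]
  rw [powA, powB]
  ring
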